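/- Let M be a commutative, cancellative, torsion-free monoid (torsion-free means: if g, h ∈ M and k ≥ 1 satisfy g^k = h^k, then g = h). Let R be a ring and I a two-sided ideal of R that is reduced as a (non-unital) ring, i.e., for all a ∈ I, a² = 0 implies a = 0. If R/I is M-central Armendariz, then R is M-central Armendariz. -/

import Mathlib

/-!
A cancellative torsion-free commutative monoid `M` embeds into a `ℚ`-vector space (its Grothendieck
group is torsion-free, hence embeds into its divisible hull); ordering a basis and taking the
lexicographic order makes `M` a linearly ordered cancellative monoid.

Over such an `M`, if the coefficients of `α` lie in a reduced ideal `I` and `α * β = 0`, then every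
`α g * β h` vanishes: for the largest `h₀` in the support of `β`, descending induction on `g` gives
`α g * β h₀ = 0` (multiplying the coefficient of `g * h₀` by `β h₀` on the left kills all other
contributions), and then `h₀` can be dropped from `β`.

For the theorem, put `c = α g * β h`. Applying this to `single 1 z * α` with `z ∈ I` gives
`I * c = 0`; the hypothesis on `R/I` gives `c * s - s * c ∈ I`; and such a commutator `d` satisfies
`d ^ 2 = d * c * s - d * s * c = 0`, so it vanishes.
-/

open Function MonoidAlgebra

theorem IsMulTorsionFree.exists_linearOrder_isOrderedCancelMonoid (M : Type*) [CommMonoid M]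
    [IsCancelMul M] [IsMulTorsionFree M] : ∃ _ : LinearOrder M, IsOrderedCancelMonoid M := by
  let G := Additive (Algebra.GrothendieckGroup M)
  let V := DivisibleHull G
  let b := Module.Basis.ofVectorSpace ℚ V
  let _ : LinearOrder (Module.Basis.ofVectorSpaceIndex ℚ V) :=
    IsWellOrder.linearOrder WellOrderingRel
  let f (m : M) : Multiplicative (Lex (_ →₀ ℚ)) :=
    .ofAdd <| toLex <| b.repr ((Additive.ofMul (Algebra.GrothendieckGroup.of m) : G) : V)
  have hf : Injective f := Multiplicative.ofAdd.injective.comp <| toLex.injective.comp <|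
    b.repr.injective.comp <| DivisibleHull.coe_injective.comp <|
    Additive.ofMul.injective.comp Algebra.GrothendieckGroup.of_injective
  have hmul (x y : M) : f (x * y) = f x * f y := by
    simp [f, DivisibleHull.coe_add]
  let _ : LinearOrder M := LinearOrder.lift' f hf
  exact ⟨_, Injective.isOrderedCancelMonoid f hmul Iff.rfl⟩

theorem MonoidAlgebra.mul_single_eq_zero {R M : Type*} [Semiring R] [Monoid M] {α : R[M]} {m : M}
    {r : R} (h : ∀ g, α.coeff g * r = 0) : α * single m r = 0 := by
  have : α * single 1 r = 0 := by ext g; simp [coeff_mul_single_one, h]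
  rw [← one_mul m, ← mul_one r, ← single_mul_single, ← mul_assoc, this, zero_mul]

namespace TwoSidedIdeal

variable {R : Type*} [Ring R]

def IsReduced (I : TwoSidedIdeal R) : Prop := ∀ a ∈ I, a ^ 2 = 0 → a = 0

namespace IsReduced

variable {I : TwoSidedIdeal R} {p q : R}

theorem mul_eq_zero_symm (hI : I.IsReduced) (hp : p ∈ I) (h : p * q = 0) : q * p = 0 :=
  hI _ (I.mul_mem_left q p hp) <| by rw [sq, mul_assoc, ← mul_assoc p, h, zero_mul, mul_zero]

theorem mul_eq_zero_of_mul_mul_eq_zero (hI : I.IsReduced) (hpq : p * q ∈ I)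
    (h : q * p * q = 0) : p * q = 0 :=
  hI _ hpq <| by rw [sq, mul_assoc, ← mul_assoc q, h, mul_zero]

theorem mul_comm_of_forall_mul_eq_zero (hI : I.IsReduced) (hq : ∀ z ∈ I, z * q = 0)
    (hpq : q * p - p * q ∈ I) : q * p = p * q := by
  set d := q * p - p * q
  have hd : d * d = 0 := by
    rw [mul_sub d, ← mul_assoc, ← mul_assoc, hq d hpq, hq _ (I.mul_mem_right d p hpq), zero_mul,
      sub_zero]
  exact sub_eq_zero.mp (hI d hpq (by rw [sq, hd]))

variable {M : Type*} [CommMonoid M] [LinearOrder M] [IsOrderedCancelMonoid M]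

theorem coeff_mul_coeff_eq_zero_of_forall_le (hI : I.IsReduced) {α β : R[M]}
    (hα : ∀ g, α.coeff g ∈ I) (hαβ : α * β = 0) {h₀ : M} (hh₀ : ∀ h ∈ β.coeff.support, h ≤ h₀)
    (g : M) : α.coeff g * β.coeff h₀ = 0 := by
  classical
  by_cases hg : g ∈ α.coeff.support
  swap
  · rw [Finsupp.notMem_support_iff.mp hg, zero_mul]
  have hwf : (α.coeff.support : Set M).WellFoundedOn (· > ·) :=
    α.coeff.support.finite_toSet.wellFoundedOn
  refine hwf.induction hg (P := fun g => α.coeff g * β.coeff h₀ = 0) fun g hg ih => ?_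
  refine hI.mul_eq_zero_of_mul_mul_eq_zero (I.mul_mem_right _ _ (hα g)) ?_
  have hcoeff := congr(β.coeff h₀ * ($hαβ).coeff (g * h₀))
  simp only [coeff_mul, coeff_zero, Finsupp.coe_zero, Pi.zero_apply, mul_zero,
    Finsupp.mul_sum] at hcoeff
  rw [Finsupp.sum_eq_single g, Finsupp.sum_eq_single h₀] at hcoeff
  · simpa [mul_assoc] using hcoeff
  · intro h _ hne
    simp [hne]
  · simp
  · intro g' hg' hne
    rw [← Finsupp.mem_support_iff] at hg'
    refine Finset.sum_eq_zero fun h hh => ?_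
    dsimp only
    split_ifs with hprod
    · rcases hne.lt_or_gt with hlt | hgt
      · exact absurd hprod (mul_lt_mul_of_lt_of_le hlt (hh₀ h hh)).ne
      · rw [← mul_assoc, hI.mul_eq_zero_symm (hα g') (ih g' hg' hgt), zero_mul]
    · exact mul_zero _
  · simp

theorem coeff_mul_coeff_eq_zero (hI : I.IsReduced) {α β : R[M]}
    (hα : ∀ g, α.coeff g ∈ I) (hαβ : α * β = 0) (g h : M) : α.coeff g * β.coeff h = 0 := by
  obtain ⟨f, rfl⟩ : ∃ f, β = ofCoeff f := ⟨β.coeff, rfl⟩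
  induction f using Finsupp.induction_on_max generalizing g h with
  | zero => simp
  | single_add m r f hf _ ih =>
    have hle : ∀ h ∈ (Finsupp.single m r + f).support, h ≤ m := fun h hh => by
      rcases Finset.mem_union.mp (Finsupp.support_add hh) with hh | hh
      · exact (Finset.mem_singleton.mp (Finsupp.support_single_subset hh)).le
      · exact (hf h hh).le
    have hr : ∀ g, α.coeff g * r = 0 := by
      simpa [Finsupp.notMem_support_iff.mp fun h => (hf m h).false] using
        hI.coeff_mul_coeff_eq_zero_of_forall_le hα hαβ hle
    have hαf : α * ofCoeff f = 0 := by
      rwa [ofCoeff_add, ofCoeff_single, mul_add, mul_single_eq_zero hr, zero_add] at hαβ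
    simp [Finsupp.single_apply, mul_add, mul_ite, hr, ih _ _ hαf]

end IsReduced
end TwoSidedIdeal

def IsCentralArmendariz (R M : Type*) [Semiring R] [Monoid M] : Prop :=
  ∀ α β : MonoidAlgebra R M, α * β = 0 →
    ∀ g ∈ α.coeff.support, ∀ h ∈ β.coeff.support, α.coeff g * β.coeff h ∈ Set.center R

namespace IsCentralArmendariz

variable {R M : Type*} [Ring R]

theorem mul_sub_mul_mem_of_quotient [Monoid M] {I : TwoSidedIdeal R}
    (hQ : IsCentralArmendariz I.ringCon.Quotient M) {α β : R[M]} (hαβ : α * β = 0) (g h : M)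
    (s : R) : α.coeff g * β.coeff h * s - s * (α.coeff g * β.coeff h) ∈ I := by
  let π := I.ringCon.mk'
  have hπ (x : R) : π x = 0 ↔ x ∈ I := by
    rw [← map_zero π, RingCon.coe_mk', RingCon.eq, I.rel_iff, sub_zero]
  by_cases hc : α.coeff g * β.coeff h ∈ I
  · exact I.sub_mem (I.mul_mem_right _ _ hc) (I.mul_mem_left _ _ hc)
  have hg : g ∈ (mapRingHom M π α).coeff.support := by
    simp only [Finsupp.mem_support_iff, coeff_mapRingHom, ne_eq, hπ]
    exact fun ha => hc (I.mul_mem_right _ _ ha)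
  have hh : h ∈ (mapRingHom M π β).coeff.support := by
    simp only [Finsupp.mem_support_iff, coeff_mapRingHom, ne_eq, hπ]
    exact fun hb => hc (I.mul_mem_left _ _ hb)
  have hcent := hQ _ _ (by rw [← map_mul, hαβ, map_zero]) g hg h hh
  rw [Semigroup.mem_center_iff] at hcent
  have := hcent (π s)
  rw [← hπ, map_sub, sub_eq_zero]
  simpa only [coeff_mapRingHom, map_mul] using this.symm

theorem of_quotient [CommMonoid M] [LinearOrder M] [IsOrderedCancelMonoid M]
    {I : TwoSidedIdeal R} (hI : I.IsReduced) (hQ : IsCentralArmendariz I.ringCon.Quotient M) :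
    IsCentralArmendariz R M := by
  intro α β hαβ g _ h _
  rw [Semigroup.mem_center_iff]
  intro s
  refine (hI.mul_comm_of_forall_mul_eq_zero (fun z hz => ?_)
    (hQ.mul_sub_mul_mem_of_quotient hαβ g h s)).symm
  have hzα : ∀ g, (single 1 z * α).coeff g ∈ I := fun g => by
    rw [coeff_single_one_mul]
    exact I.mul_mem_right _ _ hz
  simpa [coeff_single_one_mul, mul_assoc] using
    hI.coeff_mul_coeff_eq_zero hzα (by rw [mul_assoc, hαβ, mul_zero]) g h

end IsCentralArmendariz

/-- Let `M` be a commutative, cancellative, torsion-free monoid and `I` a two-sided ideal of `R`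
which is reduced as a non-unital ring. If `R/I` is `M`-central Armendariz, then so is `R`. -/
theorem stmt_8 (M R : Type*) [CommMonoid M] [Ring R]
    (hcancel : ∀ m g h : M, m * g = m * h → g = h)
    (htf : ∀ (g h : M) (k : ℕ), 1 ≤ k → g ^ k = h ^ k → g = h)
    (I : TwoSidedIdeal R)
    (hred : ∀ a : R, a ∈ I → a ^ 2 = 0 → a = 0)
    (hQ : ∀ α β : MonoidAlgebra I.ringCon.Quotient M, α * β = 0 →
      ∀ g ∈ α.coeff.support, ∀ h ∈ β.coeff.support, α.coeff g * β.coeff h ∈ Set.center I.ringCon.Quotient) :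
    ∀ α β : MonoidAlgebra R M, α * β = 0 →
      ∀ g ∈ α.coeff.support, ∀ h ∈ β.coeff.support, α.coeff g * β.coeff h ∈ Set.center R := by
  have : IsLeftCancelMul M := ⟨fun m _ _ => hcancel m _ _⟩
  have := CommMagma.IsLeftCancelMul.toIsCancelMul M
  have : IsMulTorsionFree M := ⟨fun k hk g h => htf g h k (Nat.one_le_iff_ne_zero.mpr hk)⟩
  obtain ⟨_, _⟩ := IsMulTorsionFree.exists_linearOrder_isOrderedCancelMonoid M
  exact IsCentralArmendariz.of_quotient hred hQ
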